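/- Let Φ be a crystallographic root system with positive system Φ⁺, simple roots γ₁,…,γₗ, Weyl group W, and ρ the half sum of positive roots. For a vector η let {η} denote the unique dominant vector in the W-orbit of η. If η₁ and η₂ are vectors such that η₁ − η₂ is dominant, then ⟨ρ, {η₁} − η₁⟩ ≤ ⟨ρ, {η₂} − η₂⟩. -/

import Mathlib

open scoped InnerProductSpace

variable {V : Type*} [NormedAddCommGroup V] [InnerProductSpace ℝ V]

/-- The pairing `⟨x, β^∨⟩ = 2⟨x,β⟩/⟨β,β⟩` of a vector with the coroot of `β`. -/
noncomputable def coPair (x β : V) : ℝ := 2 * ⟪x, β⟫_ℝ / ⟪β, β⟫_ℝ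

/-- The reflection in the hyperplane orthogonal to `β`. -/
noncomputable def sRefl (β x : V) : V := x - coPair x β • β

/-- Apply the word `s_{Γ wₙ} ⋯ s_{Γ w₁}` to `x` (the first letter of the list acts first). -/
noncomputable def applyWord {l : ℕ} (Γ : Fin l → V) (w : List (Fin l)) (x : V) : V :=
  w.foldl (fun y i => sRefl (Γ i) y) x

/-- A crystallographic root system together with a base (set of simple roots determining
a positive system). -/
structure RootBase (V : Type*) [NormedAddCommGroup V] [InnerProductSpace ℝ V] (l : ℕ) where
  Φ : Finset V
  simple : Fin l → V
  simple_mem : ∀ i, simple i ∈ Φ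
  nonzero : ∀ α ∈ Φ, α ≠ 0
  neg_mem : ∀ α ∈ Φ, -α ∈ Φ
  refl_mem : ∀ α ∈ Φ, ∀ γ ∈ Φ, sRefl α γ ∈ Φ
  crystal : ∀ α ∈ Φ, ∀ γ ∈ Φ, ∃ n : ℤ, coPair γ α = (n : ℝ)
  pos_or_neg : ∀ α ∈ Φ, (∃ c : Fin l → ℕ, α = ∑ i, (c i : ℝ) • simple i) ∨
      (∃ c : Fin l → ℕ, α = -∑ i, (c i : ℝ) • simple i)

namespace RootBase

variable {l : ℕ} (R : RootBase V l)

/-- The positive roots: the roots which are nonnegative integer combinations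
of the simple roots. -/
noncomputable def Pos : Finset V :=
  @Finset.filter V (fun α => ∃ c : Fin l → ℕ, α = ∑ i, (c i : ℝ) • R.simple i)
    (Classical.decPred _) R.Φ

/-- Half the sum of the positive roots. -/
noncomputable def rho : V := (2⁻¹ : ℝ) • ∑ α ∈ R.Pos, α

/-- A vector is dominant if it pairs nonnegatively with every simple coroot. -/
def IsDominant (x : V) : Prop := ∀ i, 0 ≤ coPair x (R.simple i)

/-- A run of the negative index algorithm starting at `η`: at each step the chosen
simple root has strictly negative pairing with the current vector. -/
def ValidRun (η : V) (w : List (Fin l)) : Prop :=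
  ∀ k : Fin w.length, coPair (applyWord R.simple (w.take k) η) (R.simple (w.get k)) < 0

end RootBase


section Aux

variable {V : Type*} [NormedAddCommGroup V] [InnerProductSpace ℝ V]

lemma coPair_sub (x y β : V) : coPair (x - y) β = coPair x β - coPair y β := by
  unfold coPair; rw [inner_sub_left]; ring

lemma coPair_add (x y β : V) : coPair (x + y) β = coPair x β + coPair y β := by
  unfold coPair; rw [inner_add_left]; ring

lemma coPair_smul (c : ℝ) (x β : V) : coPair (c • x) β = c * coPair x β := by
  unfold coPair; rw [real_inner_smul_left]; ring

lemma coPair_zero (β : V) : coPair (0 : V) β = 0 := by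
  unfold coPair; rw [inner_zero_left]; simp

lemma coPair_self {β : V} (hβ : β ≠ 0) : coPair β β = 2 := by
  unfold coPair
  have h : ⟪β, β⟫_ℝ ≠ 0 := inner_self_ne_zero.mpr hβ
  field_simp

lemma sRefl_sub (β x y : V) : sRefl β (x - y) = sRefl β x - sRefl β y := by
  unfold sRefl; rw [coPair_sub, sub_smul]; abel

lemma sRefl_add (β x y : V) : sRefl β (x + y) = sRefl β x + sRefl β y := by
  unfold sRefl; rw [coPair_add, add_smul]; abel

lemma sRefl_smul (β : V) (c : ℝ) (x : V) : sRefl β (c • x) = c • sRefl β x := by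
  unfold sRefl; rw [coPair_smul, smul_sub, mul_smul]

lemma sRefl_zero (β : V) : sRefl β (0 : V) = 0 := by
  unfold sRefl; rw [coPair_zero]; simp

lemma sRefl_invol {β : V} (hβ : β ≠ 0) (x : V) : sRefl β (sRefl β x) = x := by
  unfold sRefl
  rw [coPair_sub, coPair_smul, coPair_self hβ]
  have h : coPair x β - coPair x β * 2 = - coPair x β := by ring
  rw [h, neg_smul, sub_neg_eq_add]
  abel

lemma sRefl_adjoint (β x y : V) : ⟪sRefl β x, y⟫_ℝ = ⟪x, sRefl β y⟫_ℝ := by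
  unfold sRefl coPair
  rw [inner_sub_left, inner_sub_right, real_inner_smul_left, real_inner_smul_right,
    real_inner_comm β y]
  ring

lemma applyWord_nil {l : ℕ} (Γ : Fin l → V) (x : V) : applyWord Γ [] x = x := rfl

lemma applyWord_cons {l : ℕ} (Γ : Fin l → V) (i : Fin l) (w : List (Fin l)) (x : V) :
    applyWord Γ (i :: w) x = applyWord Γ w (sRefl (Γ i) x) := rfl

lemma applyWord_append {l : ℕ} (Γ : Fin l → V) (u v : List (Fin l)) (x : V) :
    applyWord Γ (u ++ v) x = applyWord Γ v (applyWord Γ u x) :=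
  List.foldl_append

lemma applyWord_sub {l : ℕ} (Γ : Fin l → V) (w : List (Fin l)) (x y : V) :
    applyWord Γ w (x - y) = applyWord Γ w x - applyWord Γ w y := by
  induction w generalizing x y with
  | nil => rfl
  | cons i t ih => rw [applyWord_cons, applyWord_cons, applyWord_cons, sRefl_sub, ih]

lemma applyWord_add {l : ℕ} (Γ : Fin l → V) (w : List (Fin l)) (x y : V) :
    applyWord Γ w (x + y) = applyWord Γ w x + applyWord Γ w y := by
  induction w generalizing x y with
  | nil => rfl
  | cons i t ih => rw [applyWord_cons, applyWord_cons, applyWord_cons, sRefl_add, ih]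

lemma applyWord_smul {l : ℕ} (Γ : Fin l → V) (w : List (Fin l)) (c : ℝ) (x : V) :
    applyWord Γ w (c • x) = c • applyWord Γ w x := by
  induction w generalizing x with
  | nil => rfl
  | cons i t ih => rw [applyWord_cons, applyWord_cons, sRefl_smul, ih]

lemma applyWord_zero {l : ℕ} (Γ : Fin l → V) (w : List (Fin l)) :
    applyWord Γ w (0 : V) = 0 := by
  induction w with
  | nil => rfl
  | cons i t ih => rw [applyWord_cons, sRefl_zero, ih]

lemma applyWord_sum {l : ℕ} (Γ : Fin l → V) (w : List (Fin l)) {ι : Type*}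
    (s : Finset ι) (f : ι → V) :
    applyWord Γ w (∑ a ∈ s, f a) = ∑ a ∈ s, applyWord Γ w (f a) := by
  induction s using Finset.cons_induction with
  | empty => simp [applyWord_zero]
  | cons a s ha ih => rw [Finset.sum_cons, Finset.sum_cons, applyWord_add, ih]

lemma applyWord_adjoint {l : ℕ} (Γ : Fin l → V) (w : List (Fin l)) (x y : V) :
    ⟪applyWord Γ w x, y⟫_ℝ = ⟪x, applyWord Γ w.reverse y⟫_ℝ := by
  induction w generalizing x with
  | nil => rfl
  | cons i t ih =>
    rw [applyWord_cons, ih, sRefl_adjoint, List.reverse_cons, applyWord_append]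
    rfl

lemma applyWord_leftInv {l : ℕ} (Γ : Fin l → V) (h : ∀ i, Γ i ≠ 0) (w : List (Fin l))
    (x : V) : applyWord Γ w.reverse (applyWord Γ w x) = x := by
  induction w generalizing x with
  | nil => rfl
  | cons i t ih =>
    rw [applyWord_cons, List.reverse_cons, applyWord_append, ih]
    exact sRefl_invol (h i) x

lemma applyWord_injective {l : ℕ} (Γ : Fin l → V) (h : ∀ i, Γ i ≠ 0) (w : List (Fin l)) :
    Function.Injective (applyWord Γ w) :=
  Function.LeftInverse.injective (applyWord_leftInv Γ h w)

end Aux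

section Main

variable {V : Type*} [NormedAddCommGroup V] [InnerProductSpace ℝ V] {l : ℕ}

lemma RootBase.mem_Pos_iff (R : RootBase V l) (α : V) :
    α ∈ R.Pos ↔ α ∈ R.Φ ∧ ∃ c : Fin l → ℕ, α = ∑ i, (c i : ℝ) • R.simple i := by
  letI := Classical.decPred
    (fun α : V => ∃ c : Fin l → ℕ, α = ∑ i, (c i : ℝ) • R.simple i)
  unfold RootBase.Pos
  exact Finset.mem_filter

lemma RootBase.Pos_subset (R : RootBase V l) : R.Pos ⊆ R.Φ := fun α hα =>
  ((R.mem_Pos_iff α).mp hα).1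

lemma RootBase.simple_inner_nonneg (R : RootBase V l) {d : V} (hd : R.IsDominant d)
    (i : Fin l) : 0 ≤ ⟪d, R.simple i⟫_ℝ := by
  have h1 := hd i
  have h2 : 0 < ⟪R.simple i, R.simple i⟫_ℝ :=
    lt_of_le_of_ne real_inner_self_nonneg
      (Ne.symm (inner_self_ne_zero.mpr (R.nonzero _ (R.simple_mem i))))
  unfold coPair at h1
  rw [div_nonneg_iff] at h1
  rcases h1 with ⟨h, _⟩ | ⟨_, h⟩ <;> linarith

lemma RootBase.combo_inner_nonneg (R : RootBase V l) {d : V} (hd : R.IsDominant d)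
    (c : Fin l → ℕ) : 0 ≤ ⟪d, ∑ i, (c i : ℝ) • R.simple i⟫_ℝ := by
  rw [inner_sum]
  refine Finset.sum_nonneg fun i _ => ?_
  rw [real_inner_smul_right]
  exact mul_nonneg (by positivity) (R.simple_inner_nonneg hd i)

lemma RootBase.pos_inner_nonneg (R : RootBase V l) {d : V} (hd : R.IsDominant d)
    {α : V} (hα : α ∈ R.Pos) : 0 ≤ ⟪d, α⟫_ℝ := by
  obtain ⟨-, c, rfl⟩ := (R.mem_Pos_iff α).mp hα
  exact R.combo_inner_nonneg hd c

lemma RootBase.notPos_inner_nonpos (R : RootBase V l) {d : V} (hd : R.IsDominant d)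
    {β : V} (hβΦ : β ∈ R.Φ) (hβ : β ∉ R.Pos) : ⟪d, β⟫_ℝ ≤ 0 := by
  rcases R.pos_or_neg β hβΦ with h | ⟨c, hc⟩
  · exact absurd ((R.mem_Pos_iff β).mpr ⟨hβΦ, h⟩) hβ
  · rw [hc, inner_neg_right]
    simpa using R.combo_inner_nonneg hd c

lemma RootBase.applyWord_mem (R : RootBase V l) (w : List (Fin l)) {α : V}
    (hα : α ∈ R.Φ) : applyWord R.simple w α ∈ R.Φ := by
  induction w generalizing α with
  | nil => exact hα
  | cons i t ih =>
    rw [applyWord_cons]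
    exact ih (R.refl_mem _ (R.simple_mem i) _ hα)

lemma RootBase.key (R : RootBase V l) {d : V} (hd : R.IsDominant d)
    (w : List (Fin l)) :
    ⟪d, applyWord R.simple w R.rho⟫_ℝ ≤ ⟪d, R.rho⟫_ℝ := by
  classical
  have hne : ∀ i, R.simple i ≠ 0 := fun i => R.nonzero _ (R.simple_mem i)
  set T : V → V := applyWord R.simple w with hT
  set B : Finset V := R.Pos.image T with hB
  have hTρ : T R.rho = (2⁻¹ : ℝ) • ∑ β ∈ B, β := by
    rw [hB, Finset.sum_image (fun a _ b _ h => applyWord_injective _ hne w h),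
      RootBase.rho, hT, applyWord_smul, applyWord_sum]
  have hρ : ⟪d, R.rho⟫_ℝ = 2⁻¹ * ∑ α ∈ R.Pos, ⟪d, α⟫_ℝ := by
    rw [RootBase.rho, real_inner_smul_right, inner_sum]
  have hTρ' : ⟪d, T R.rho⟫_ℝ = 2⁻¹ * ∑ β ∈ B, ⟪d, β⟫_ℝ := by
    rw [hTρ, real_inner_smul_right, inner_sum]
  rw [hρ, hTρ']
  have hsum : ∑ β ∈ B, ⟪d, β⟫_ℝ ≤ ∑ α ∈ R.Pos, ⟪d, α⟫_ℝ := by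
    have hsplit := Finset.sum_filter_add_sum_filter_not B (· ∈ R.Pos)
      (fun β => ⟪d, β⟫_ℝ)
    have h1 : ∑ β ∈ B.filter (· ∈ R.Pos), ⟪d, β⟫_ℝ ≤ ∑ α ∈ R.Pos, ⟪d, α⟫_ℝ := by
      refine Finset.sum_le_sum_of_subset_of_nonneg ?_ fun α hα _ => R.pos_inner_nonneg hd hα
      intro β hβ
      exact (Finset.mem_filter.mp hβ).2
    have h2 : ∑ β ∈ B.filter (fun β => ¬ β ∈ R.Pos), ⟪d, β⟫_ℝ ≤ 0 := by
      refine Finset.sum_nonpos fun β hβ => ?_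
      rw [Finset.mem_filter] at hβ
      obtain ⟨hβB, hβnot⟩ := hβ
      obtain ⟨α, hαPos, rfl⟩ := Finset.mem_image.mp hβB
      exact R.notPos_inner_nonpos hd (R.applyWord_mem w (R.Pos_subset hαPos)) hβnot
    linarith
  linarith

end Main

/-- If `η₁ - η₂` is dominant, then `⟨ρ, {η₁} - η₁⟩ ≤ ⟨ρ, {η₂} - η₂⟩`, where `ρ` is the half
sum of the positive roots and `{ηᵢ} = dᵢ` denotes the dominant conjugate of `ηᵢ` under the
Weyl group (generated by the simple reflections). -/
theorem dominant_conjugate_pairing_mono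
    {V : Type*} [NormedAddCommGroup V] [InnerProductSpace ℝ V] {l : ℕ}
    (R : RootBase V l) (η₁ η₂ d₁ d₂ : V) (hdom : R.IsDominant (η₁ - η₂))
    (hd₁ : R.IsDominant d₁) (hw₁ : ∃ w : List (Fin l), applyWord R.simple w η₁ = d₁)
    (hd₂ : R.IsDominant d₂) (hw₂ : ∃ w : List (Fin l), applyWord R.simple w η₂ = d₂) :
    ⟪R.rho, d₁ - η₁⟫_ℝ ≤ ⟪R.rho, d₂ - η₂⟫_ℝ := by
  obtain ⟨w₁, hw₁⟩ := hw₁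
  obtain ⟨w₂, hw₂⟩ := hw₂
  have hne : ∀ i, R.simple i ≠ 0 := fun i => R.nonzero _ (R.simple_mem i)
  have e1 : ⟪applyWord R.simple w₁ η₁ - applyWord R.simple w₁ η₂, R.rho⟫_ℝ
      ≤ ⟪η₁ - η₂, R.rho⟫_ℝ := by
    rw [← applyWord_sub, applyWord_adjoint]
    exact R.key hdom _
  rw [hw₁, inner_sub_left, inner_sub_left] at e1
  have hη₂ : applyWord R.simple w₂.reverse d₂ = η₂ := by
    rw [← hw₂]
    exact applyWord_leftInv _ hne w₂ η₂
  have hB : ⟪applyWord R.simple w₁ η₂, R.rho⟫_ℝ ≤ ⟪d₂, R.rho⟫_ℝ := by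
    rw [← hη₂, ← applyWord_append, applyWord_adjoint]
    exact R.key hd₂ _
  have g : ∀ x y : V, ⟪R.rho, x - y⟫_ℝ = ⟪x, R.rho⟫_ℝ - ⟪y, R.rho⟫_ℝ := fun x y => by
    rw [inner_sub_right, real_inner_comm R.rho x, real_inner_comm R.rho y]
  rw [g, g]
  linarith
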